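/- Let f : ℝⁿ → ℝ be twice continuously differentiable, C ⊆ ℝⁿ closed, x̄ ∈ C, d ∈ T_C(x̄), x̄ a local optimal solution of min f over C in direction d, and ∇f(x̄)·d = 0. Then ∇f(x̄)·v ≥ 0 for all v ∈ T''_C(x̄; d), and ∇f(x̄)·w + ∇²f(x̄)(d,d) ≥ 0 for all w ∈ T²_C(x̄; d). -/

import Mathlib

open Filter Topology Set
open scoped RealInnerProductSpace

noncomputable section

variable {E : Type*} [NormedAddCommGroup E] [InnerProductSpace ℝ E]

/-- Bouligand (contingent) tangent cone. -/
def tangentConeB (S : Set E) (x : E) : Set E :=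
  {d | ∃ (t : ℕ → ℝ) (dk : ℕ → E), (∀ k, 0 < t k) ∧
    Tendsto t atTop (nhds 0) ∧ Tendsto dk atTop (nhds d) ∧
    ∀ k, x + t k • dk k ∈ S}

/-- Outer second-order tangent set. -/
def secondTangent (S : Set E) (x d : E) : Set E :=
  {w | ∃ (t : ℕ → ℝ) (wk : ℕ → E), (∀ k, 0 < t k) ∧
    Tendsto t atTop (nhds 0) ∧ Tendsto wk atTop (nhds w) ∧
    ∀ k, x + t k • d + ((1/2 : ℝ) * t k ^ 2) • wk k ∈ S}

/-- Asymptotic second-order tangent cone. -/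
def asympTangent (S : Set E) (x d : E) : Set E :=
  {w | ∃ (t r : ℕ → ℝ) (wk : ℕ → E), (∀ k, 0 < t k) ∧ (∀ k, 0 < r k) ∧
    Tendsto t atTop (nhds 0) ∧ Tendsto r atTop (nhds 0) ∧
    Tendsto (fun k => t k / r k) atTop (nhds 0) ∧
    Tendsto wk atTop (nhds w) ∧
    ∀ k, x + t k • d + ((1/2 : ℝ) * t k * r k) • wk k ∈ S}

/-- Fréchet (regular) normal cone (empty, by convention, outside of `S`). -/
def frechetNormal (S : Set E) (x : E) : Set E :=
  {v | x ∈ S ∧ ∀ ε > (0:ℝ), ∃ δ > (0:ℝ), ∀ y ∈ S, ‖y - x‖ < δ →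
    ⟪v, y - x⟫ ≤ ε * ‖y - x‖}

/-- Limiting (Mordukhovich) normal cone. -/
def limitingNormal (S : Set E) (x : E) : Set E :=
  {v | ∃ (xk vk : ℕ → E), Tendsto xk atTop (nhds x) ∧
    Tendsto vk atTop (nhds v) ∧ ∀ k, vk k ∈ frechetNormal S (xk k)}

/-- Directional limiting normal cone. -/
def dirLimitingNormal (S : Set E) (x d : E) : Set E :=
  {v | ∃ (t : ℕ → ℝ) (dk vk : ℕ → E), (∀ k, 0 < t k) ∧
    Tendsto t atTop (nhds 0) ∧ Tendsto dk atTop (nhds d) ∧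
    Tendsto vk atTop (nhds v) ∧ ∀ k, vk k ∈ frechetNormal S (x + t k • dk k)}

/-- Directional regular (Clarke) tangent cone. -/
def dirClarkeTangent (S : Set E) (x d : E) : Set E :=
  {v | ∀ (t : ℕ → ℝ) (dk : ℕ → E), (∀ k, 0 < t k) →
    Tendsto t atTop (nhds 0) → Tendsto dk atTop (nhds d) →
    (∀ k, x + t k • dk k ∈ S) →
    ∃ vk : ℕ → E, Tendsto vk atTop (nhds v) ∧
      ∀ k, vk k ∈ tangentConeB S (x + t k • dk k)}

/-- Directional neighborhood `V_{ρ,δ}(d)`. -/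
def dirNbhd (d : E) (ρ δ : ℝ) : Set E :=
  {w | ‖w‖ ≤ δ ∧ ‖‖d‖ • w - ‖w‖ • d‖ ≤ ρ * ‖w‖ * ‖d‖}

/-- Support function, with values in `EReal` (so that `σ_∅ = -∞`). -/
def suppFn (A : Set E) (l : E) : EReal :=
  ⨆ u ∈ A, ((⟪l, u⟫ : ℝ) : EReal)

/-!
Points of `C` of the form `x + t • (d + e)` with `t → 0⁺` and `e → 0` eventually lie in
`x + V_{ρ,δ}(d)`, so `f` does not decrease along them. Since `∇f(x) d = 0`, the second-order Taylor
expansion along `x + t d + s w ∈ C` reads `f(x + t d + s w) - f x = s ∇f(x) w + ½ t² ∇²f(x)(d,d)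
+ o(t²)`. In the asymptotic cone `s = ½ t r` with `t / r → 0`, so dividing by `s` kills the
quadratic term; in the outer second-order set `s = ½ t²`, and the quadratic term survives.
-/

open Asymptotics

section Taylor

variable {F G : Type*} [NormedAddCommGroup F] [NormedSpace ℝ F]
  [NormedAddCommGroup G] [NormedSpace ℝ G]
  {f : F → G} {f' : F → F →L[ℝ] G} {f'' : F →L[ℝ] F →L[ℝ] G} {x : F}

theorem isLittleO_taylor_two (hf : ∀ᶠ y in 𝓝 x, HasFDerivAt f (f' y) y)
    (hf' : HasFDerivAt f' f'' x) :
    (fun h => f (x + h) - f x - f' x h - (2⁻¹ : ℝ) • f'' h h) =o[𝓝 0] fun h => ‖h‖ ^ 2 := by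
  have hsymm := second_derivative_symmetric_of_eventually hf hf'
  have hf₀ : ∀ᶠ h in 𝓝 0, HasFDerivAt f (f' (x + h)) (x + h) :=
    (continuous_const_add x).tendsto' 0 x (add_zero x) |>.eventually hf
  refine isLittleO_iff.2 fun ε hε => ?_
  obtain ⟨δ, hδ, hball⟩ := Metric.eventually_nhds_iff_ball.1
    (hf₀.and ((hasFDerivAt_iff_isLittleO_nhds_zero.1 hf').def hε))
  filter_upwards [Metric.ball_mem_nhds 0 hδ] with h hh
  have hderiv : ∀ k ∈ Metric.closedBall (0 : F) ‖h‖,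
      HasFDerivWithinAt (fun k => f (x + k) - f x - f' x k - (2⁻¹ : ℝ) • f'' k k)
        (f' (x + k) - f' x - f'' k) (Metric.closedBall 0 ‖h‖) k := by
    intro k hk
    have hk' := (hball k (Metric.closedBall_subset_ball (mem_ball_zero_iff.1 hh) hk)).1
    have hq : HasFDerivAt (fun k => f'' k k) (f''.flip k + f'' k) k :=
      f''.hasFDerivAt.clm_apply (hasFDerivAt_id k) |>.congr_fderiv (by ext; simp [add_comm])
    have := ((hk'.comp k ((hasFDerivAt_id k).const_add x)).sub_const (f x)).sub
      (f' x).hasFDerivAt |>.sub (hq.const_smul (2⁻¹ : ℝ))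
    refine (this.congr_fderiv ?_).hasFDerivWithinAt
    ext v
    simp only [sub_apply, ContinuousLinearMap.coe_comp, Function.comp_apply,
      ContinuousLinearMap.coe_id', id_eq, smul_apply, add_apply, ContinuousLinearMap.flip_apply,
      hsymm v k]
    module
  have hbound : ∀ k ∈ Metric.closedBall (0 : F) ‖h‖, ‖f' (x + k) - f' x - f'' k‖ ≤ ε * ‖h‖ := by
    intro k hk
    rw [mem_closedBall_zero_iff] at hk
    calc _ ≤ ε * ‖k‖ := (hball k (Metric.closedBall_subset_ball (mem_ball_zero_iff.1 hh)
            (mem_closedBall_zero_iff.2 hk))).2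
      _ ≤ ε * ‖h‖ := by gcongr
  have := (convex_closedBall (0 : F) ‖h‖).norm_image_sub_le_of_norm_hasFDerivWithin_le hderiv
    hbound (Metric.mem_closedBall_self (norm_nonneg h)) (mem_closedBall_zero_iff.2 le_rfl)
  simpa [sq, mul_assoc] using this

theorem ContDiffAt.isLittleO_taylor_two (hf : ContDiffAt ℝ 2 f x) :
    (fun h => f (x + h) - f x - fderiv ℝ f x h - (2⁻¹ : ℝ) • fderiv ℝ (fderiv ℝ f) x h h)
      =o[𝓝 0] fun h => ‖h‖ ^ 2 :=
  _root_.isLittleO_taylor_two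
    ((hf.eventually (by simp)).mono fun _ hy => (hy.differentiableAt two_ne_zero).hasFDerivAt)
    ((hf.fderiv_right (m := 1) (by norm_num)).differentiableAt one_ne_zero).hasFDerivAt

theorem tendsto_taylor_quotient {ι : Type*} {L : F →L[ℝ] G} {B : F →L[ℝ] F →L[ℝ] G}
    (hR : (fun h => f (x + h) - f x - L h - (2⁻¹ : ℝ) • B h h) =o[𝓝 0] fun h => ‖h‖ ^ 2)
    {l : Filter ι} {t : ι → ℝ} {u : ι → F} {d : F} (ht : Tendsto t l (𝓝 0)) (ht₀ : ∀ k, t k ≠ 0)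
    (hu : Tendsto u l (𝓝 d)) :
    Tendsto (fun k => ((1/2 : ℝ) * t k ^ 2)⁻¹ • (f (x + t k • u k) - f x - L (t k • u k))) l
      (𝓝 (B d d)) := by
  have hsplit : ∀ k, ((1/2 : ℝ) * t k ^ 2)⁻¹ • (f (x + t k • u k) - f x - L (t k • u k))
      = B (u k) (u k) + ((1/2 : ℝ) * t k ^ 2)⁻¹ • (f (x + t k • u k) - f x - L (t k • u k)
          - (2⁻¹ : ℝ) • B (t k • u k) (t k • u k)) := by
    intro k
    have htk := ht₀ k
    have hB : ((1/2 : ℝ) * t k ^ 2)⁻¹ • (2⁻¹ : ℝ) • B (t k • u k) (t k • u k) = B (u k) (u k) := by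
      rw [map_smul, map_smul, smul_apply, smul_smul, smul_smul, smul_smul]
      convert one_smul ℝ (B (u k) (u k)) using 2
      field_simp
    rw [smul_sub _ _ ((2⁻¹ : ℝ) • _), hB]
    abel
  have htu : Tendsto (fun k => t k • u k) l (𝓝 0) := by simpa using ht.smul hu
  have hsmall : (fun k => ‖t k • u k‖ ^ 2) =O[l] fun k => (1/2 : ℝ) * t k ^ 2 := by
    have hbdd := ((hu.norm.pow 2).const_mul 2).isBigO_one ℝ
    have := (isBigO_refl (fun k => (1/2 : ℝ) * t k ^ 2) l).mul hbdd
    simp only [mul_one] at this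
    refine this.congr_left fun k => ?_
    rw [norm_smul, mul_pow, Real.norm_eq_abs, sq_abs]
    ring
  have hrem := (hR.comp_tendsto htu).trans_isBigO hsmall |>.tendsto_inv_smul_nhds_zero
  simpa using (((B.continuous₂.tendsto (d, d)).comp (hu.prodMk_nhds hu)).add hrem).congr
    fun k => (hsplit k).symm

end Taylor

theorem eventually_smul_mem_dirNbhd {ι : Type*} {l : Filter ι} {d : E} {ρ δ : ℝ} (hρ : 0 < ρ)
    (hδ : 0 < δ) {t : ι → ℝ} {u : ι → E} (ht : ∀ k, 0 ≤ t k) (ht₀ : Tendsto t l (𝓝 0))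
    (hu : Tendsto u l (𝓝 d)) :
    ∀ᶠ k in l, t k • u k ∈ dirNbhd d ρ δ := by
  have hsmall : ∀ᶠ k in l, ‖t k • u k‖ ≤ δ := by
    have : Tendsto (fun k => t k • u k) l (𝓝 0) := by simpa using ht₀.smul hu
    exact this.norm.eventually_le_const (by simpa using hδ)
  -- the cone condition is positively homogeneous in `u` and, for `d ≠ 0`, strict at `u = d`
  have hcone : ∀ᶠ k in l, ‖‖d‖ • u k - ‖u k‖ • d‖ ≤ ρ * ‖u k‖ * ‖d‖ := by
    rcases eq_or_ne d 0 with rfl | hd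
    · simp
    have hc : Continuous fun v : E => ‖‖d‖ • v - ‖v‖ • d‖ - ρ * ‖v‖ * ‖d‖ := by fun_prop
    have hneg : ‖‖d‖ • d - ‖d‖ • d‖ - ρ * ‖d‖ * ‖d‖ < 0 := by
      rw [sub_self, norm_zero, zero_sub, neg_neg_iff_pos]; positivity
    filter_upwards [((hc.tendsto d).comp hu).eventually_lt_const hneg] with k hk
    simpa [sub_nonpos] using hk.le
  filter_upwards [hsmall, hcone] with k hsmall hcone
  refine ⟨hsmall, ?_⟩
  calc ‖‖d‖ • (t k • u k) - ‖t k • u k‖ • d‖ = t k * ‖‖d‖ • u k - ‖u k‖ • d‖ := by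
        rw [norm_smul, Real.norm_of_nonneg (ht k), mul_smul, smul_comm, ← smul_sub, norm_smul,
          Real.norm_of_nonneg (ht k)]
    _ ≤ t k * (ρ * ‖u k‖ * ‖d‖) := by gcongr; exact ht k
    _ = ρ * ‖t k • u k‖ * ‖d‖ := by rw [norm_smul, Real.norm_of_nonneg (ht k)]; ring

def IsDirLocalMinOn {β : Type*} [Preorder β] (f : E → β) (C : Set E) (x d : E) : Prop :=
  ∃ ρ > (0:ℝ), ∃ δ > (0:ℝ), ∀ y ∈ C, y - x ∈ dirNbhd d ρ δ → f x ≤ f y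

theorem IsDirLocalMinOn.eventually_le {β ι : Type*} [Preorder β] {f : E → β} {C : Set E}
    {x d : E} (hmin : IsDirLocalMinOn f C x d) {l : Filter ι} {t : ι → ℝ} {u : ι → E}
    (ht : ∀ k, 0 ≤ t k) (ht₀ : Tendsto t l (𝓝 0)) (hu : Tendsto u l (𝓝 d))
    (hmem : ∀ k, x + t k • u k ∈ C) :
    ∀ᶠ k in l, f x ≤ f (x + t k • u k) := by
  obtain ⟨ρ, hρ, δ, hδ, hmin⟩ := hmin
  filter_upwards [eventually_smul_mem_dirNbhd hρ hδ ht ht₀ hu] with k hk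
  exact hmin _ (hmem k) (by rwa [add_sub_cancel_left])

theorem IsDirLocalMinOn.fderiv_add_nonneg_of_mem_secondTangent {f : E → ℝ} {C : Set E}
    {x d w : E} (hmin : IsDirLocalMinOn f C x d) (hf : ContDiffAt ℝ 2 f x)
    (hcrit : fderiv ℝ f x d = 0) (hw : w ∈ secondTangent C x d) :
    0 ≤ fderiv ℝ f x w + fderiv ℝ (fderiv ℝ f) x d d := by
  obtain ⟨t, wk, ht, ht₀, hwk, hmem⟩ := hw
  set u := fun k => d + ((1/2 : ℝ) * t k) • wk k
  have hu : Tendsto u atTop (𝓝 d) := by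
    simpa [u] using (tendsto_const_nhds (x := d)).add ((ht₀.const_mul (1/2 : ℝ)).smul hwk)
  have hmem' : ∀ k, x + t k • u k ∈ C := fun k => by
    convert hmem k using 1; simp only [u]; module
  have hlim := ((fderiv ℝ f x).continuous.tendsto w |>.comp hwk).add
    (tendsto_taylor_quotient hf.isLittleO_taylor_two ht₀ (fun k => (ht k).ne') hu)
  refine ge_of_tendsto hlim ?_
  filter_upwards [hmin.eventually_le (fun k => (ht k).le) ht₀ hu hmem'] with k hk
  have hs : 0 < (1/2 : ℝ) * t k ^ 2 := by have := ht k; positivity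
  have hlin : fderiv ℝ f x (t k • u k) = ((1/2 : ℝ) * t k ^ 2) * fderiv ℝ f x (wk k) := by
    simp only [u, smul_add, smul_smul, map_add, map_smul, hcrit, smul_eq_mul]; ring
  simp only [Function.comp_apply, smul_eq_mul, hlin]
  rw [mul_sub, inv_mul_cancel_left₀ hs.ne', add_sub_cancel]
  exact mul_nonneg (inv_nonneg.2 hs.le) (sub_nonneg.2 hk)

theorem IsDirLocalMinOn.fderiv_nonneg_of_mem_asympTangent {f : E → ℝ} {C : Set E}
    {x d v : E} (hmin : IsDirLocalMinOn f C x d) (hf : ContDiffAt ℝ 2 f x)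
    (hcrit : fderiv ℝ f x d = 0) (hv : v ∈ asympTangent C x d) :
    0 ≤ fderiv ℝ f x v := by
  obtain ⟨t, r, wk, ht, hr, ht₀, hr₀, htr, hwk, hmem⟩ := hv
  set u := fun k => d + ((1/2 : ℝ) * r k) • wk k
  have hu : Tendsto u atTop (𝓝 d) := by
    simpa [u] using (tendsto_const_nhds (x := d)).add ((hr₀.const_mul (1/2 : ℝ)).smul hwk)
  have hmem' : ∀ k, x + t k • u k ∈ C := fun k => by
    convert hmem k using 1; simp only [u]; module
  have hlim := ((fderiv ℝ f x).continuous.tendsto v |>.comp hwk).add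
    (htr.mul (tendsto_taylor_quotient hf.isLittleO_taylor_two ht₀ (fun k => (ht k).ne') hu))
  rw [zero_mul, add_zero] at hlim
  refine ge_of_tendsto hlim ?_
  filter_upwards [hmin.eventually_le (fun k => (ht k).le) ht₀ hu hmem'] with k hk
  have htk := ht k
  have hrk := hr k
  have hs : 0 < (1/2 : ℝ) * t k * r k := by positivity
  have hlin : fderiv ℝ f x (t k • u k) = ((1/2 : ℝ) * t k * r k) * fderiv ℝ f x (wk k) := by
    simp only [u, smul_add, smul_smul, map_add, map_smul, hcrit, smul_eq_mul]; ring
  have hcoef : t k / r k * ((1/2 : ℝ) * t k ^ 2)⁻¹ = ((1/2 : ℝ) * t k * r k)⁻¹ := by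
    field_simp
  simp only [Function.comp_apply, smul_eq_mul, hlin]
  rw [← mul_assoc, hcoef, mul_sub, inv_mul_cancel_left₀ hs.ne', add_sub_cancel]
  exact mul_nonneg (inv_nonneg.2 hs.le) (sub_nonneg.2 hk)

theorem stmt14_general {n : ℕ} (f : EuclideanSpace ℝ (Fin n) → ℝ) (hf : ContDiff ℝ 2 f)
    (C : Set (EuclideanSpace ℝ (Fin n))) (xb : EuclideanSpace ℝ (Fin n))
    (d : EuclideanSpace ℝ (Fin n))
    (hopt : ∃ ρ > (0:ℝ), ∃ δ > (0:ℝ), ∀ x ∈ C, x - xb ∈ dirNbhd d ρ δ → f xb ≤ f x)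
    (hcrit : fderiv ℝ f xb d = 0) :
    (∀ v ∈ asympTangent C xb d, 0 ≤ fderiv ℝ f xb v) ∧
    (∀ w ∈ secondTangent C xb d,
      0 ≤ fderiv ℝ f xb w + (fderiv ℝ (fderiv ℝ f) xb d) d) :=
  ⟨fun _ hv => IsDirLocalMinOn.fderiv_nonneg_of_mem_asympTangent hopt hf.contDiffAt hcrit hv,
    fun _ hw => IsDirLocalMinOn.fderiv_add_nonneg_of_mem_secondTangent hopt hf.contDiffAt hcrit hw⟩

theorem stmt14 {n : ℕ} (f : EuclideanSpace ℝ (Fin n) → ℝ) (hf : ContDiff ℝ 2 f)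
    (C : Set (EuclideanSpace ℝ (Fin n))) (hC : IsClosed C)
    (xb : EuclideanSpace ℝ (Fin n)) (hxb : xb ∈ C)
    (d : EuclideanSpace ℝ (Fin n)) (hd : d ∈ tangentConeB C xb)
    (hopt : ∃ ρ > (0:ℝ), ∃ δ > (0:ℝ), ∀ x ∈ C, x - xb ∈ dirNbhd d ρ δ → f xb ≤ f x)
    (hcrit : fderiv ℝ f xb d = 0) :
    (∀ v ∈ asympTangent C xb d, 0 ≤ fderiv ℝ f xb v) ∧
    (∀ w ∈ secondTangent C xb d,
      0 ≤ fderiv ℝ f xb w + (fderiv ℝ (fderiv ℝ f) xb d) d) :=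
  stmt14_general f hf C xb d hopt hcrit
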